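/- The function f(t) = ∑_{k≥0} 2^{-k/2} e^{i 2^k t} on 𝕋 satisfies the Lipschitz condition of order 1/2 (there is a constant C with |f(t₁)−f(t₂)| ≤ C·d(t₁,t₂)^{1/2} for all t₁,t₂ ∈ 𝕋) but does not belong to W_2^{1/2}(𝕋). In particular, Lip_{1/2}(𝕋) is not contained in W_2^{1/2}(𝕋). -/

import Mathlib

/-! The Hölder bound: the `k`-th term of `f(t₁) - f(t₂)` has modulus at most
`2^{-k/2} min(2, 2^k d)` with `d = d(t₁, t₂)`. Summing `2^{k/2} d` over the `k` with
`2^k ≤ 1/d` and `2 · 2^{-k/2}` over the remaining `k` gives two geometric series, each `O(d^{1/2})`.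

The failure of `W_2^{1/2}`: the series converges absolutely, so its Fourier coefficients can be
computed termwise, and `|f̂(2^j)|² 2^j = 1` for every `j`. -/

open Real MeasureTheory

noncomputable section

instance : Fact (0 < 2 * Real.pi) := ⟨by positivity⟩

/-- The lacunary series `f(t) = ∑_{k≥0} 2^{-k/2} e^{i 2^k t}` on the circle `𝕋 = ℝ/2πℤ`. -/
def lacunaryHalf : AddCircle (2 * Real.pi) → ℂ :=
  fun t => ∑' k : ℕ, (((2 : ℝ) ^ (-(k : ℝ) / 2) : ℝ) : ℂ) * fourier ((2 : ℤ) ^ k) t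

lemma tsum_min_le_sum_add_tsum {f g : ℕ → ℝ} (hf : ∀ k, 0 ≤ f k) (hg₀ : ∀ k, 0 ≤ g k)
    (hg : Summable g) (K : ℕ) :
    ∑' k, min (f k) (g k) ≤ ∑ k ∈ Finset.range K, f k + ∑' k, g (k + K) := by
  have hmin : Summable fun k => min (f k) (g k) :=
    hg.of_nonneg_of_le (fun k => le_min (hf k) (hg₀ k)) fun k => min_le_right _ _
  rw [← hmin.sum_add_tsum_nat_add K]
  exact add_le_add (Finset.sum_le_sum fun k _ => min_le_left _ _)
    ((hmin.comp_injective (add_left_injective K)).tsum_le_tsum (fun k => min_le_right _ _)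
      ((summable_nat_add_iff K).2 hg))

lemma tsum_pow_mul_min_le {ρ q d : ℝ} (hρ₀ : 0 ≤ ρ) (hρ₁ : ρ < 1) (hq : 0 ≤ q) (hρq : ρ * q ≠ 1)
    (hd : 0 ≤ d) (K : ℕ) :
    ∑' k : ℕ, ρ ^ k * min 2 (q ^ k * d) ≤
      ((ρ * q) ^ K - 1) / (ρ * q - 1) * d + 2 * ρ ^ K / (1 - ρ) := by
  have hsum : Summable fun k : ℕ => 2 * ρ ^ k :=
    (summable_geometric_of_lt_one hρ₀ hρ₁).mul_left 2
  have tail : ∑' k : ℕ, 2 * ρ ^ (k + K) = 2 * ρ ^ K / (1 - ρ) := by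
    simp_rw [pow_add, ← mul_assoc, tsum_mul_right, tsum_mul_left, tsum_geometric_of_lt_one hρ₀ hρ₁]
    ring
  calc ∑' k : ℕ, ρ ^ k * min 2 (q ^ k * d)
      = ∑' k : ℕ, min ((ρ * q) ^ k * d) (2 * ρ ^ k) := by
        congr 1; ext k
        rw [mul_min_of_nonneg _ _ (pow_nonneg hρ₀ k), min_comm, mul_pow]; ring_nf
    _ ≤ ∑ k ∈ Finset.range K, (ρ * q) ^ k * d + ∑' k : ℕ, 2 * ρ ^ (k + K) :=
        tsum_min_le_sum_add_tsum (fun k => by positivity) (fun k => by positivity) hsum K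
    _ = _ := by rw [← Finset.sum_mul, geom_sum_eq hρq, tail]

lemma exists_pow_mul_le_rpow_and_pow_le_mul_rpow {q α d : ℝ} (hq : 1 < q) (hα₀ : 0 ≤ α)
    (hα₁ : α ≤ 1) (hd₀ : 0 < d) (hd₁ : d ≤ 1) :
    ∃ K : ℕ, (q ^ (-α) * q) ^ K * d ≤ d ^ α ∧ (q ^ (-α)) ^ K ≤ q ^ α * d ^ α := by
  have hq₀ : 0 < q := by linarith
  obtain ⟨K, hK, hK'⟩ := exists_nat_pow_near ((one_le_inv₀ hd₀).2 hd₁) hq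
  refine ⟨K, ?_, ?_⟩
  · calc (q ^ (-α) * q) ^ K * d = (q ^ K) ^ (1 - α) * d := by
          rw [← rpow_add_one hq₀.ne', rpow_pow_comm hq₀.le]; ring_nf
      _ ≤ d⁻¹ ^ (1 - α) * d := by gcongr
      _ = d ^ α := by rw [inv_rpow hd₀.le, ← rpow_neg hd₀.le, ← rpow_add_one hd₀.ne']; ring_nf
  · calc (q ^ (-α)) ^ K = q ^ α * (q ^ (K + 1)) ^ (-α) := by
          rw [rpow_pow_comm hq₀.le, pow_succ, mul_rpow (by positivity) hq₀.le,
            ← mul_assoc, mul_comm (q ^ α), mul_assoc, ← rpow_add hq₀]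
          simp
      _ ≤ q ^ α * d⁻¹ ^ (-α) := by
          gcongr q ^ α * ?_
          exact rpow_le_rpow_of_nonpos (by positivity) hK'.le (by linarith)
      _ = q ^ α * d ^ α := by rw [inv_rpow hd₀.le, ← rpow_neg hd₀.le, neg_neg]

lemma exists_tsum_rpow_neg_pow_mul_min_le {q α : ℝ} (hq : 1 < q) (hα₀ : 0 < α) (hα₁ : α < 1) :
    ∃ C, ∀ d, 0 ≤ d → ∑' k : ℕ, (q ^ (-α)) ^ k * min 2 (q ^ k * d) ≤ C * d ^ α := by
  have hq₀ : 0 < q := by linarith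
  have hρ₀ : 0 < q ^ (-α) := by positivity
  have hρ₁ : q ^ (-α) < 1 := rpow_lt_one_of_one_lt_of_neg hq (by linarith)
  have hσ₁ : 1 < q ^ (-α) * q := by
    rw [← rpow_add_one hq₀.ne']; exact one_lt_rpow hq (by linarith)
  have hρ' := sub_pos.2 hρ₁
  have hσ' := sub_pos.2 hσ₁
  refine ⟨1 / (q ^ (-α) * q - 1) + 2 * q ^ α / (1 - q ^ (-α)), fun d hd => ?_⟩
  rcases hd.eq_or_lt with rfl | hd₀
  · simp [zero_rpow hα₀.ne']
  rcases le_or_gt d 1 with hd₁ | hd₁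
  · obtain ⟨K, head, tail⟩ := exists_pow_mul_le_rpow_and_pow_le_mul_rpow hq hα₀.le hα₁.le hd₀ hd₁
    calc _ ≤ _ := tsum_pow_mul_min_le hρ₀.le hρ₁ hq₀.le hσ₁.ne' hd K
      _ ≤ (q ^ (-α) * q) ^ K * d / (q ^ (-α) * q - 1) + 2 * (q ^ α * d ^ α) / (1 - q ^ (-α)) := by
        rw [div_mul_eq_mul_div, sub_mul, one_mul]
        gcongr
        linarith
      _ ≤ d ^ α / (q ^ (-α) * q - 1) + 2 * (q ^ α * d ^ α) / (1 - q ^ (-α)) := by gcongr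
      _ = (1 / (q ^ (-α) * q - 1) + 2 * q ^ α / (1 - q ^ (-α))) * d ^ α := by ring
  · calc _ ≤ _ := tsum_pow_mul_min_le hρ₀.le hρ₁ hq₀.le hσ₁.ne' hd 0
      _ = 2 / (1 - q ^ (-α)) := by simp
      _ ≤ 2 * q ^ α / (1 - q ^ (-α)) := by
        gcongr; exact le_mul_of_one_le_right zero_le_two (one_le_rpow hq.le hα₀.le)
      _ ≤ 2 * q ^ α / (1 - q ^ (-α)) * d ^ α :=
        le_mul_of_one_le_right (by positivity) (one_le_rpow hd₁.le hα₀.le)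
      _ ≤ (1 / (q ^ (-α) * q - 1) + 2 * q ^ α / (1 - q ^ (-α))) * d ^ α := by
        gcongr
        exact le_add_of_nonneg_left (by positivity)

section Fourier

variable {T : ℝ}

lemma fourier_add_apply (n : ℤ) (x y : AddCircle T) :
    fourier n (x + y) = fourier n x * fourier n y := by
  simp [fourier_apply, smul_add, AddCircle.toCircle_add]

lemma norm_fourier_apply (n : ℤ) (x : AddCircle T) : ‖fourier n x‖ = 1 := Circle.norm_coe _

lemma summable_mul_fourier {a : ℕ → ℂ} (ha : Summable (‖a ·‖)) (n : ℕ → ℤ) (x : AddCircle T) :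
    Summable fun k => a k * fourier (n k) x :=
  ha.of_norm_bounded fun k => by rw [norm_mul, norm_fourier_apply, mul_one]

variable [hT : Fact (0 < T)]

lemma norm_fourier_coe_sub_one_le (n : ℤ) (u : ℝ) :
    ‖fourier n (u : AddCircle T) - 1‖ ≤ 2 * π / T * |(n : ℝ)| * |u| := by
  have hT₀ : 0 < T := hT.out
  calc ‖fourier n (u : AddCircle T) - 1‖
      = ‖Complex.exp (Complex.I * ↑(2 * π / T * n * u)) - 1‖ := by
        rw [fourier_coe_apply]; push_cast; ring_nf
    _ ≤ ‖2 * π / T * n * u‖ := norm_exp_I_mul_ofReal_sub_one_le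
    _ = 2 * π / T * |(n : ℝ)| * |u| := by
        rw [Real.norm_eq_abs, abs_mul, abs_mul, abs_of_pos (by positivity : 0 < 2 * π / T)]

lemma norm_fourier_sub_one_le (n : ℤ) (z : AddCircle T) :
    ‖fourier n z - 1‖ ≤ 2 * π / T * |(n : ℝ)| * ‖z‖ := by
  induction z using QuotientAddGroup.induction_on with | H u =>
  -- `c` is the representative of `u` nearest to `0`
  set c := u - round (T⁻¹ * u) * T
  have hc : (c : AddCircle T) = u := by simp [c, ← zsmul_eq_mul, AddCircle.coe_period]
  calc ‖fourier n (u : AddCircle T) - 1‖ = ‖fourier n (c : AddCircle T) - 1‖ := by rw [hc]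
    _ ≤ 2 * π / T * |(n : ℝ)| * |c| := norm_fourier_coe_sub_one_le n c
    _ = 2 * π / T * |(n : ℝ)| * ‖(u : AddCircle T)‖ := by rw [AddCircle.norm_eq]

lemma norm_fourier_sub_le (n : ℤ) (x y : AddCircle T) :
    ‖fourier n x - fourier n y‖ ≤ min 2 (2 * π / T * |(n : ℝ)| * dist x y) := by
  refine le_min ?_ ?_
  · calc ‖fourier n x - fourier n y‖ ≤ ‖fourier n x‖ + ‖fourier n y‖ := norm_sub_le _ _
      _ = 2 := by rw [norm_fourier_apply, norm_fourier_apply]; norm_num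
  · calc ‖fourier n x - fourier n y‖ = ‖(fourier n (x - y) - 1) * fourier n y‖ := by
          rw [sub_mul, one_mul, ← fourier_add_apply, sub_add_cancel]
      _ = ‖fourier n (x - y) - 1‖ := by rw [norm_mul, norm_fourier_apply, mul_one]
      _ ≤ _ := by rw [dist_eq_norm]; exact norm_fourier_sub_one_le n (x - y)

lemma norm_tsum_mul_fourier_sub_le {a : ℕ → ℂ} (ha : Summable (‖a ·‖)) (n : ℕ → ℤ)
    (x y : AddCircle T) :
    ‖∑' k, a k * fourier (n k) x - ∑' k, a k * fourier (n k) y‖ ≤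
      ∑' k, ‖a k‖ * min 2 (2 * π / T * |(n k : ℝ)| * dist x y) := by
  have hT₀ : 0 < T := hT.out
  rw [← (summable_mul_fourier ha n x).tsum_sub (summable_mul_fourier ha n y)]
  refine tsum_of_norm_bounded (Summable.hasSum ?_) fun k => ?_
  · refine (ha.mul_right 2).of_nonneg_of_le (fun k => ?_) fun k => ?_
    · exact mul_nonneg (norm_nonneg _) (le_min zero_le_two (by positivity))
    · exact mul_le_mul_of_nonneg_left (min_le_left _ _) (norm_nonneg _)
  · rw [← mul_sub, norm_mul]
    exact mul_le_mul_of_nonneg_left (norm_fourier_sub_le _ _ _) (norm_nonneg _)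

lemma fourierCoeff_tsum {E : Type*} [NormedAddCommGroup E] [NormedSpace ℂ E] [CompleteSpace E]
    {ι : Type*} [Countable ι] {F : ι → AddCircle T → E}
    (hF : ∀ i, Integrable (F i) AddCircle.haarAddCircle)
    (hsum : Summable fun i => ∫ t, ‖F i t‖ ∂AddCircle.haarAddCircle) (m : ℤ) :
    fourierCoeff (fun t => ∑' i, F i t) m = ∑' i, fourierCoeff (F i) m := by
  simp only [fourierCoeff, ← tsum_const_smul'']
  rw [integral_tsum_of_summable_integral_norm (fun i => (hF i).fourier_smul _)]
  simpa only [norm_smul, norm_fourier_apply, one_mul] using hsum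

lemma fourierCoeff_tsum_mul_fourier {a : ℕ → ℂ} (ha : Summable (‖a ·‖)) {n : ℕ → ℤ}
    (hn : Function.Injective n) (j : ℕ) :
    fourierCoeff (fun t : AddCircle T => ∑' k, a k * fourier (n k) t) (n j) = a j := by
  rw [fourierCoeff_tsum (fun k => ((fourier (n k)).continuous.integrable_of_hasCompactSupport
    (.of_compactSpace _)).const_mul (a k)) ?_, tsum_eq_single j]
  · rw [fourierCoeff.const_mul, fourierCoeff_fourier, Pi.single_eq_same, mul_one]
  · intro k hk
    rw [fourierCoeff.const_mul, fourierCoeff_fourier, Pi.single_eq_of_ne' (hn.ne hk), mul_zero]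
  · simpa only [norm_mul, norm_fourier_apply, mul_one, integral_const, probReal_univ,
      one_smul] using ha

end Fourier

lemma norm_lacunaryHalf_coeff (k : ℕ) :
    ‖(((2 : ℝ) ^ (-(k : ℝ) / 2) : ℝ) : ℂ)‖ = ((2 : ℝ) ^ (-(1 / 2 : ℝ))) ^ k := by
  rw [Complex.norm_real, norm_of_nonneg (by positivity), ← rpow_mul_natCast zero_le_two]
  ring_nf

lemma summable_norm_lacunaryHalf_coeff :
    Summable fun k : ℕ => ‖(((2 : ℝ) ^ (-(k : ℝ) / 2) : ℝ) : ℂ)‖ := by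
  simp_rw [norm_lacunaryHalf_coeff]
  exact summable_geometric_of_lt_one (by positivity)
    (rpow_lt_one_of_one_lt_of_neg one_lt_two (by norm_num))

lemma lacunaryHalf_holder :
    ∃ C : ℝ, ∀ t₁ t₂ : AddCircle (2 * π),
      ‖lacunaryHalf t₁ - lacunaryHalf t₂‖ ≤ C * dist t₁ t₂ ^ (1 / 2 : ℝ) := by
  obtain ⟨C, hC⟩ := exists_tsum_rpow_neg_pow_mul_min_le one_lt_two (by norm_num : (0 : ℝ) < 1 / 2)
    (by norm_num)
  refine ⟨C, fun t₁ t₂ => ?_⟩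
  calc _ ≤ _ := norm_tsum_mul_fourier_sub_le summable_norm_lacunaryHalf_coeff _ t₁ t₂
    _ = ∑' k : ℕ, ((2 : ℝ) ^ (-(1 / 2 : ℝ))) ^ k * min 2 (2 ^ k * dist t₁ t₂) := by
      congr 1; ext k
      rw [norm_lacunaryHalf_coeff, div_self (by positivity), one_mul]
      push_cast
      rw [abs_of_pos (by positivity)]
    _ ≤ _ := hC _ dist_nonneg

lemma fourierCoeff_lacunaryHalf_two_pow (j : ℕ) :
    fourierCoeff lacunaryHalf (2 ^ j) = (((2 : ℝ) ^ (-(j : ℝ) / 2) : ℝ) : ℂ) :=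
  fourierCoeff_tsum_mul_fourier summable_norm_lacunaryHalf_coeff
    (pow_right_injective₀ two_pos (by norm_num)) j

lemma not_summable_lacunaryHalf :
    ¬ Summable (fun k : ℤ => ‖fourierCoeff lacunaryHalf k‖ ^ 2 * |(k : ℝ)|) := by
  intro h
  have hone (j : ℕ) : ‖fourierCoeff lacunaryHalf (2 ^ j)‖ ^ 2 * |((2 ^ j : ℤ) : ℝ)| = 1 := by
    have hsq : ((2 : ℝ) ^ (-(1 / 2 : ℝ))) ^ 2 = 1 / 2 := by
      rw [← rpow_natCast, ← rpow_mul zero_le_two]; norm_num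
    rw [fourierCoeff_lacunaryHalf_two_pow, norm_lacunaryHalf_coeff, ← pow_mul, mul_comm j, pow_mul,
      hsq]
    push_cast
    rw [abs_of_pos (by positivity), ← mul_pow]
    norm_num
  have := h.comp_injective (pow_right_injective₀ (two_pos : (0 : ℤ) < 2) (by norm_num))
  simp only [Function.comp_def, hone] at this
  exact one_ne_zero ((summable_const_iff 1).1 this)

/-- The function `f(t) = ∑_{k≥0} 2^{-k/2} e^{i 2^k t}` satisfies the Lipschitz condition of
order `1/2` but does not belong to `W_2^{1/2}(𝕋)`; in particular, `Lip_{1/2}(𝕋)` is not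
contained in `W_2^{1/2}(𝕋)`. -/
theorem lacunaryHalf_lip_half_not_W_half :
    (∃ C : ℝ, ∀ t₁ t₂ : AddCircle (2 * Real.pi),
        ‖lacunaryHalf t₁ - lacunaryHalf t₂‖ ≤ C * dist t₁ t₂ ^ (1 / 2 : ℝ)) ∧
    ¬ Summable (fun k : ℤ => ‖fourierCoeff lacunaryHalf k‖ ^ 2 * |(k : ℝ)|) ∧
    ¬ (∀ g : AddCircle (2 * Real.pi) → ℂ,
        (∃ C : ℝ, ∀ t₁ t₂ : AddCircle (2 * Real.pi),
          ‖g t₁ - g t₂‖ ≤ C * dist t₁ t₂ ^ (1 / 2 : ℝ)) →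
        Summable (fun k : ℤ => ‖fourierCoeff g k‖ ^ 2 * |(k : ℝ)|)) :=
  ⟨lacunaryHalf_holder, not_summable_lacunaryHalf,
    fun h => not_summable_lacunaryHalf (h _ lacunaryHalf_holder)⟩
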